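/- Let Ψ : ℝ → ℝ be continuous increasing with Ψ(0) = 0 and suppose Ψ satisfies (Ψ(r) - Ψ(s))(r - s) ≥ C₀|r - s|² for all r, s with C₀ > 0. Then for λ, λ' > 0 and x, y ∈ ℝ, (Ψ_λ(x) - Ψ_{λ'}(y))(x - y) ≥ C₀|J_λ(x) - J_{λ'}(y)|² - 2(λ + λ')(|Ψ_λ(x)|² + |Ψ_{λ'}(y)|²), where J_λ, Ψ_λ denote the resolvent and Yosida approximation of Ψ. -/
import Mathlib

theorem stmt_5 (Ψ : ℝ → ℝ) (C₀ : ℝ) (hC₀ : 0 < C₀)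
    (hcont : Continuous Ψ) (hΨ0 : Ψ 0 = 0)
    (hmono : ∀ r s : ℝ, (Ψ r - Ψ s) * (r - s) ≥ C₀ * |r - s| ^ 2)
    (lam lam' : ℝ) (hlam : 0 < lam) (hlam' : 0 < lam')
    (J J' : ℝ → ℝ)
    (hJ : ∀ r, J r + lam * Ψ (J r) = r)
    (hJ' : ∀ r, J' r + lam' * Ψ (J' r) = r)
    (Ψlam Ψlam' : ℝ → ℝ)
    (hΨlam : ∀ r, Ψlam r = (r - J r) / lam)
    (hΨlam' : ∀ r, Ψlam' r = (r - J' r) / lam') :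
    ∀ x y : ℝ,
      (Ψlam x - Ψlam' y) * (x - y) ≥
        C₀ * |J x - J' y| ^ 2 - 2 * (lam + lam') * (|Ψlam x| ^ 2 + |Ψlam' y| ^ 2) := by
  intro x y
  have h1 : Ψlam x = Ψ (J x) := by
    rw [hΨlam]; field_simp; linarith [hJ x]
  have h2 : Ψlam' y = Ψ (J' y) := by
    rw [hΨlam']; field_simp; linarith [hJ' y]
  have hx : x = J x + lam * Ψ (J x) := (hJ x).symm
  have hy : y = J' y + lam' * Ψ (J' y) := (hJ' y).symm
  have hm := hmono (J x) (J' y)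
  rw [h1, h2, sq_abs] at *
  have habs : |Ψ (J x) * Ψ (J' y)| ≤ (Ψ (J x))^2 / 2 + (Ψ (J' y))^2 / 2 := by
    nlinarith [sq_nonneg (Ψ (J x) - Ψ (J' y)), sq_nonneg (Ψ (J x) + Ψ (J' y)),
      abs_mul_abs_self (Ψ (J x) * Ψ (J' y)), le_abs_self (Ψ (J x) * Ψ (J' y)),
      neg_abs_le (Ψ (J x) * Ψ (J' y))]
  simp only [sq_abs]
  set a := Ψ (J x) with ha
  set b := Ψ (J' y) with hb
  have hkey : (a - b) * (x - y)
      = (a - b) * (J x - J' y) + (a - b) * (lam * a - lam' * b) := by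
    linear_combination (a - b) * hx - (a - b) * hy
  have h3 : (a - b) * (lam * a - lam' * b)
      ≥ -2 * (lam + lam') * (a ^ 2 + b ^ 2) := by
    nlinarith [mul_nonneg hlam.le (sq_nonneg a), mul_nonneg hlam'.le (sq_nonneg b),
      mul_nonneg (add_pos hlam hlam').le (sq_nonneg (a - b)),
      mul_nonneg (add_pos hlam hlam').le (sq_nonneg (a + b))]
  linarith [hm]
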